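/- The ellipsoid spanned by the columns of a nonsingular matrix is unique: if A and B are nonsingular n×n real matrices such that every column of B lies on the ellipsoid {x : xᵀ(AAᵀ)⁻¹x = 1} determined by A, and every column of A lies on the ellipsoid determined by B, and both ellipsoids are nondegenerate, then AAᵀ = BBᵀ; in particular A and B have the same singular values and principal axes. -/

import Mathlib

open Matrix

lemma posDef_mul_transpose_self {n : ℕ} (A : Matrix (Fin n) (Fin n) ℝ)
    (hA : A.det ≠ 0) : (A * Aᵀ).PosDef := by
  rw [posDef_iff_dotProduct_mulVec]
  constructor
  · rw [Matrix.IsHermitian, conjTranspose_eq_transpose_of_trivial, transpose_mul,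
      transpose_transpose]
  · intro x hx
    have hv : x ᵥ* A ≠ 0 := by
      intro h
      exact hx (Matrix.vecMul_injective_iff_isUnit.mpr (isUnit_iff_isUnit_det A |>.mpr
        (isUnit_iff_ne_zero.mpr hA)) (by simpa using h))
    have heq : star x ⬝ᵥ (A * Aᵀ) *ᵥ x = (x ᵥ* A) ⬝ᵥ (x ᵥ* A) := by
      simp [star_trivial, ← mulVec_mulVec, dotProduct_mulVec, mulVec_transpose]
    rw [heq]
    have h0 : (0:ℝ) ≤ (x ᵥ* A) ⬝ᵥ (x ᵥ* A) :=
      Finset.sum_nonneg fun i _ => mul_self_nonneg _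
    exact lt_of_le_of_ne h0 (fun h => hv (dotProduct_self_eq_zero.mp h.symm))

open scoped MatrixOrder in
lemma posDef_exists_sqrt_aux {n : ℕ} (P : Matrix (Fin n) (Fin n) ℝ) (hP : P.PosDef) :
    ∃ S : Matrix (Fin n) (Fin n) ℝ, S * S = P ∧ Sᵀ = S := by
  refine ⟨CFC.sqrt P, CFC.sqrt_mul_sqrt_self P hP.posSemidef.nonneg, ?_⟩
  have h := (CFC.sqrt_nonneg P).posSemidef.1.eq
  rwa [conjTranspose_eq_transpose_of_trivial] at h

theorem ellipsoid_unique
    (n : ℕ) (A B : Matrix (Fin n) (Fin n) ℝ)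
    (hA : A.det ≠ 0) (hB : B.det ≠ 0)
    (hBA : ∀ i, (fun k => B k i) ⬝ᵥ (A * Aᵀ)⁻¹.mulVec (fun k => B k i) = 1)
    (hAB : ∀ i, (fun k => A k i) ⬝ᵥ (B * Bᵀ)⁻¹.mulVec (fun k => A k i) = 1) :
    A * Aᵀ = B * Bᵀ := by
  set M := A * Aᵀ with hMdef
  set N := B * Bᵀ with hNdef
  have hMpd : M.PosDef := posDef_mul_transpose_self A hA
  have hNpd : N.PosDef := posDef_mul_transpose_self B hB
  have hdetM : M.det ≠ 0 := ne_of_gt hMpd.det_pos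
  have hdetN : N.det ≠ 0 := ne_of_gt hNpd.det_pos
  have hMinv : M⁻¹.PosDef := hMpd.inv
  have hNinv : N⁻¹.PosDef := hNpd.inv
  have hMM : M⁻¹ * M = 1 := nonsing_inv_mul _ (isUnit_iff_ne_zero.mpr hdetM)
  have hNN : N * N⁻¹ = 1 := mul_nonsing_inv _ (isUnit_iff_ne_zero.mpr hdetN)
  -- Step 1: trace (M⁻¹ * N) = n
  have tr1 : trace (M⁻¹ * N) = (n : ℝ) := by
    have : M⁻¹ * N = (M⁻¹ * B) * Bᵀ := by rw [hNdef, Matrix.mul_assoc]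
    rw [this, trace_mul_comm, Matrix.trace]
    have hdiag : ∀ i, (Bᵀ * (M⁻¹ * B)) i i = 1 := by
      intro i
      have := hBA i
      simp only [dotProduct, mulVec, dotProduct] at this
      rw [← this]
      simp [Matrix.mul_apply, dotProduct, Finset.mul_sum, Finset.sum_mul]
    simp [Matrix.diag, hdiag]
  have tr2 : trace (N⁻¹ * M) = (n : ℝ) := by
    have : N⁻¹ * M = (N⁻¹ * A) * Aᵀ := by rw [hMdef, Matrix.mul_assoc]
    rw [this, trace_mul_comm, Matrix.trace]
    have hdiag : ∀ i, (Aᵀ * (N⁻¹ * A)) i i = 1 := by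
      intro i
      have := hAB i
      simp only [dotProduct, mulVec, dotProduct] at this
      rw [← this]
      simp [Matrix.mul_apply, dotProduct, Finset.mul_sum, Finset.sum_mul]
    simp [Matrix.diag, hdiag]
  -- Step 2: trace (M⁻¹ * D * (N⁻¹ * D)) = 0 where D = N - M
  set D := N - M with hDdef
  have hkey : trace ((M⁻¹ * D) * (N⁻¹ * D)) = 0 := by
    have e1 : M⁻¹ * D = M⁻¹ * N - 1 := by
      rw [hDdef, Matrix.mul_sub, hMM]
    have e2 : N⁻¹ * D = 1 - N⁻¹ * M := by
      rw [hDdef, Matrix.mul_sub, nonsing_inv_mul _ (isUnit_iff_ne_zero.mpr hdetN)]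
    rw [e1, e2]
    have e3 : (M⁻¹ * N - 1) * (1 - N⁻¹ * M)
        = M⁻¹ * N - 1 - 1 + N⁻¹ * M := by
      have h4 : M⁻¹ * N * (N⁻¹ * M) = 1 := by
        rw [Matrix.mul_assoc, ← Matrix.mul_assoc N, hNN, Matrix.one_mul, hMM]
      rw [Matrix.sub_mul, Matrix.mul_sub, Matrix.mul_sub, h4, Matrix.mul_one,
        Matrix.one_mul, Matrix.one_mul]
      abel
    rw [e3]
    simp [trace_sub, trace_add, tr1, tr2, trace_one]
  -- Step 3: D = 0
  have hDt : Dᵀ = D := by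
    have hMt : Mᵀ = M := by
      have h := hMpd.1.eq; rwa [conjTranspose_eq_transpose_of_trivial] at h
    have hNt : Nᵀ = N := by
      have h := hNpd.1.eq; rwa [conjTranspose_eq_transpose_of_trivial] at h
    rw [hDdef, transpose_sub, hMt, hNt]
  obtain ⟨S, hS2, hSt⟩ := posDef_exists_sqrt_aux M⁻¹ hMinv
  have hdetS : S.det ≠ 0 := by
    intro h
    apply ne_of_gt hMinv.det_pos
    rw [← hS2, det_mul, h, mul_zero]
  set X := S * D with hXdef
  have hXtrace : trace (X * N⁻¹ * Xᵀ) = 0 := by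
    have h1 : X * N⁻¹ * Xᵀ = S * (D * N⁻¹ * D * S) := by
      rw [hXdef, transpose_mul, hDt, hSt]
      noncomm_ring
    rw [h1, trace_mul_comm, Matrix.mul_assoc (D * N⁻¹ * D), hS2, trace_mul_comm,
      ← hkey]
    congr 1
    noncomm_ring
  have hdiag_nonneg : ∀ i, 0 ≤ (X * N⁻¹ * Xᵀ) i i := by
    intro i
    have heq : (X * N⁻¹ * Xᵀ) i i = (fun k => X i k) ⬝ᵥ N⁻¹ *ᵥ (fun k => X i k) := by
      simp [Matrix.mul_apply, dotProduct, mulVec, Finset.mul_sum, Finset.sum_mul]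
      rw [Finset.sum_comm]
      exact Finset.sum_congr rfl fun k _ => Finset.sum_congr rfl fun l _ => by ring
    rw [heq]
    have := (posSemidef_iff_dotProduct_mulVec.mp hNinv.posSemidef).2 (fun k => X i k)
    simpa using this
  have hdiag_zero : ∀ i, (X * N⁻¹ * Xᵀ) i i = 0 := by
    intro i
    have hsum : ∑ i, (X * N⁻¹ * Xᵀ) i i = 0 := hXtrace
    exact (Finset.sum_eq_zero_iff_of_nonneg (fun i _ => hdiag_nonneg i)).mp hsum i
      (Finset.mem_univ i)
  have hXzero : X = 0 := by
    ext i k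
    by_contra hik
    have hrow : (fun k => X i k) ≠ 0 := by
      intro h
      exact hik (by simpa using congrFun h k)
    have hpos := (posDef_iff_dotProduct_mulVec.mp hNinv).2 (x := fun k => X i k) hrow
    have heq : (X * N⁻¹ * Xᵀ) i i = (fun k => X i k) ⬝ᵥ N⁻¹ *ᵥ (fun k => X i k) := by
      simp [Matrix.mul_apply, dotProduct, mulVec, Finset.mul_sum, Finset.sum_mul]
      rw [Finset.sum_comm]
      exact Finset.sum_congr rfl fun k _ => Finset.sum_congr rfl fun l _ => by ring
    rw [hdiag_zero i] at heq
    simp only [star_trivial] at hpos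
    rw [← heq] at hpos
    exact lt_irrefl _ hpos
  have hD0 : D = 0 := by
    have : S⁻¹ * (S * D) = 0 := by rw [← hXdef, hXzero, Matrix.mul_zero]
    rwa [← Matrix.mul_assoc, nonsing_inv_mul _ (isUnit_iff_ne_zero.mpr hdetS), Matrix.one_mul] at this
  have := sub_eq_zero.mp (hDdef ▸ hD0)
  exact this.symm
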